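/- arXiv:1503.06367 — 3 statements merged into one kernel-verified Lean document; each statement's English description precedes it below -/
import Mathlib

section
/- Fix positive integers k and define, for a \geq 0 and c \geq 0, g_{k,c}(a) = [q^{\lfloor ak/2 \rfloor - c}] \binom{a+k}{k}_q. Then for each fixed k and c, the function a \mapsto g_{k,c}(a) is a quasipolynomial in a, i.e., there exist a period N and polynomials p_0, ..., p_{N-1} such that g_{k,c}(a) = p_{a mod N}(a) for all sufficiently large a. -/
/-!
Clearing denominators, `[a+k choose k]_q = ∏_{i=1}^k (1 - q^{a+i}) / (q;q)_k`, and expanding the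
numerator over subsets `S ⊆ {1,…,k}` writes `g_{k,c}(a)` as a signed sum of coefficients of
`1/(q;q)_k` at `⌊ak/2⌋ - c - |S| a - ΣS`. These coefficients form a quasipolynomial: multiplying
`1/(q;q)_k` by `(1 - q^{k!})^k` gives a polynomial, so along each residue class mod `k!` the `k`-th
finite difference eventually vanishes, and Gregory–Newton interpolation applies. When `2|S| < k`
the index grows like `(k - 2|S|) a / 2`, and precomposing a quasipolynomial with `a ↦ ⌊u a / 2⌋`
gives a quasipolynomial; when `2|S| ≥ k` the index is negative and the term vanishes.
-/

def zcoeffZ (P : Polynomial ℤ) (n : ℤ) : ℤ :=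
  if 0 ≤ n then P.coeff n.toNat else 0

open Filter Finset fwdDiff
open scoped Nat Polynomial PowerSeries

def IsQuasiPolynomial (f : ℕ → ℚ) : Prop :=
  ∃ N, 0 < N ∧ ∃ p : ℕ → ℚ[X], ∀ᶠ a in atTop, f a = (p (a % N)).eval (a : ℚ)

namespace IsQuasiPolynomial

open Polynomial

variable {f g : ℕ → ℚ}

lemma zero : IsQuasiPolynomial fun _ => 0 :=
  ⟨1, one_pos, fun _ => 0, by simp⟩

lemma congr (hf : IsQuasiPolynomial f) (h : f =ᶠ[atTop] g) : IsQuasiPolynomial g := by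
  obtain ⟨N, hN, p, hp⟩ := hf
  exact ⟨N, hN, p, h.symm.trans hp⟩

lemma add (hf : IsQuasiPolynomial f) (hg : IsQuasiPolynomial g) :
    IsQuasiPolynomial fun a => f a + g a := by
  obtain ⟨N₁, hN₁, p₁, hp₁⟩ := hf
  obtain ⟨N₂, hN₂, p₂, hp₂⟩ := hg
  refine ⟨N₁ * N₂, Nat.mul_pos hN₁ hN₂, fun r => p₁ (r % N₁) + p₂ (r % N₂), ?_⟩
  filter_upwards [hp₁, hp₂] with a h₁ h₂
  rw [eval_add, Nat.mod_mul_right_mod, Nat.mod_mul_left_mod, h₁, h₂]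

lemma const_mul (hf : IsQuasiPolynomial f) (c : ℚ) : IsQuasiPolynomial fun a => c * f a := by
  obtain ⟨N, hN, p, hp⟩ := hf
  refine ⟨N, hN, fun r => C c * p r, ?_⟩
  filter_upwards [hp] with a ha
  rw [eval_mul, eval_C, ha]

lemma sum {ι : Type*} {s : Finset ι} {F : ι → ℕ → ℚ} (hF : ∀ i ∈ s, IsQuasiPolynomial (F i)) :
    IsQuasiPolynomial fun a => ∑ i ∈ s, F i a := by
  classical
  induction s using Finset.induction_on with
  | empty => simpa using zero
  | insert i s hi ih =>
    simp only [Finset.sum_insert hi]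
    exact (hF i (mem_insert_self i s)).add (ih fun j hj => hF j (mem_insert_of_mem hj))

lemma of_residues {N : ℕ} (hN : 0 < N)
    (h : ∀ r < N, ∃ P : ℚ[X], ∀ᶠ m in atTop, f (r + N * m) = P.eval (m : ℚ)) :
    IsQuasiPolynomial f := by
  choose! P hP using h
  refine ⟨N, hN, fun r => (P r).comp (C (N : ℚ)⁻¹ * (X - C (r : ℚ))), ?_⟩
  have hall : ∀ᶠ m in atTop, ∀ r ∈ range N, f (r + N * m) = (P r).eval (m : ℚ) :=
    (eventually_all_finset _).2 fun r hr => hP r (mem_range.1 hr)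
  filter_upwards [(Nat.tendsto_div_const_atTop hN.ne').eventually hall] with a ha
  have hdiv := Nat.mod_add_div a N
  have hquot : (C (N : ℚ)⁻¹ * (X - C ((a % N : ℕ) : ℚ))).eval (a : ℚ) = ((a / N : ℕ) : ℚ) := by
    have hNq : (N : ℚ) ≠ 0 := by exact_mod_cast hN.ne'
    have hcast : (a : ℚ) = ((a % N : ℕ) : ℚ) + N * ((a / N : ℕ) : ℚ) := by exact_mod_cast hdiv.symm
    rw [eval_mul, eval_C, eval_sub, eval_X, eval_C, hcast, add_sub_cancel_left, ← mul_assoc,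
      inv_mul_cancel₀ hNq, one_mul]
  rw [eval_comp, hquot, ← ha (a % N) (mem_range.2 (Nat.mod_lt a hN)), hdiv]

lemma comp_mul_div (hf : IsQuasiPolynomial f) {u d : ℕ} (hu : 0 < u) (hd : 0 < d) :
    IsQuasiPolynomial fun a => f (u * a / d) := by
  obtain ⟨L, hL, p, hp⟩ := hf
  obtain ⟨A, hA⟩ := eventually_atTop.1 hp
  refine of_residues (N := d * L) (Nat.mul_pos hd hL) fun r _ =>
    ⟨(p (u * r / d % L)).comp (C ((u * r / d : ℕ) : ℚ) + C ((L * u : ℕ) : ℚ) * X), ?_⟩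
  filter_upwards [eventually_ge_atTop A] with m hm
  have hsplit : u * (r + d * L * m) / d = u * r / d + L * (u * m) := by
    rw [show u * (r + d * L * m) = u * r + d * (L * (u * m)) by ring,
      Nat.add_mul_div_left _ _ hd]
  have hA' : A ≤ u * r / d + L * (u * m) :=
    le_add_left (hm.trans ((Nat.le_mul_of_pos_left m hu).trans (Nat.le_mul_of_pos_left _ hL)))
  rw [hsplit, hA _ hA', Nat.add_mul_mod_self_left]
  simp only [eval_comp, eval_add, eval_mul, eval_C, eval_X, Nat.cast_add, Nat.cast_mul, mul_assoc]

end IsQuasiPolynomial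

section FiniteDifferences

open Polynomial

lemma exists_eq_eval_of_fwdDiff_iter_eq_zero {g : ℕ → ℚ} {k : ℕ} (h : Δ_[1] ^[k] g = 0) :
    ∃ P : ℚ[X], ∀ n, g n = P.eval (n : ℚ) := by
  have hvanish : ∀ j, k ≤ j → Δ_[1] ^[j] g 0 = 0 := by
    intro j hj
    obtain ⟨i, rfl⟩ := Nat.exists_eq_add_of_le hj
    have hfixed : Δ_[1] (0 : ℕ → ℚ) = 0 := by ext; simp [fwdDiff]
    rw [add_comm, Function.iterate_add_apply, h, Function.iterate_fixed hfixed i, Pi.zero_apply]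
  refine ⟨∑ j ∈ range k, C (Δ_[1] ^[j] g 0 / j !) * descPochhammer ℚ j, fun n => ?_⟩
  -- Gregory–Newton: only the differences of order `< k` survive
  have hnewton := shift_eq_sum_fwdDiff_iter 1 g n 0
  simp only [zero_add, smul_eq_mul, mul_one, nsmul_eq_mul] at hnewton
  have hterm : ∀ j, (C (Δ_[1] ^[j] g 0 / j !) * descPochhammer ℚ j).eval (n : ℚ)
      = n.choose j * Δ_[1] ^[j] g 0 := by
    intro j
    rw [eval_mul, eval_C, Nat.cast_choose_eq_descPochhammer_div]
    ring
  rw [hnewton]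
  simp only [eval_finsetSum, hterm]
  have hzero : ∀ j, (n < j ∨ k ≤ j) → (n.choose j : ℚ) * Δ_[1] ^[j] g 0 = 0 := by
    rintro j (hj | hj)
    · rw [Nat.choose_eq_zero_of_lt hj, Nat.cast_zero, zero_mul]
    · rw [hvanish j hj, mul_zero]
  calc ∑ j ∈ range (n + 1), (n.choose j : ℚ) * Δ_[1] ^[j] g 0
      = ∑ j ∈ range (min (n + 1) k), (n.choose j : ℚ) * Δ_[1] ^[j] g 0 :=
        (sum_subset (range_subset_range.2 (min_le_left _ _)) fun j _ hj =>
          hzero j (by simp only [mem_range] at *; omega)).symm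
    _ = ∑ j ∈ range k, (n.choose j : ℚ) * Δ_[1] ^[j] g 0 :=
        sum_subset (range_subset_range.2 (min_le_right _ _)) fun j _ hj =>
          hzero j (by simp only [mem_range] at *; omega)

lemma exists_eventually_eq_eval_of_eventually_fwdDiff_iter_eq_zero {g : ℕ → ℚ} {k : ℕ}
    (h : ∀ᶠ m in atTop, Δ_[1] ^[k] g m = 0) : ∃ P : ℚ[X], ∀ᶠ m in atTop, g m = P.eval (m : ℚ) := by
  obtain ⟨M, hM⟩ := eventually_atTop.1 h
  obtain ⟨P, hP⟩ := exists_eq_eval_of_fwdDiff_iter_eq_zero (g := fun m => g (m + M)) (k := k)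
    (funext fun m => by rw [fwdDiff_iter_comp_add]; exact hM _ le_add_self)
  refine ⟨P.comp (X - C (M : ℚ)), ?_⟩
  filter_upwards [eventually_ge_atTop M] with m hm
  rw [← Nat.sub_add_cancel hm, hP, eval_comp]
  simp [Nat.cast_sub hm]

end FiniteDifferences

open PowerSeries

lemma fwdDiff_iter_coeff_add_mul (F : ℚ⟦X⟧) (r L k m : ℕ) :
    Δ_[1] ^[k] (fun m => coeff (r + L * m) F) m =
      coeff (r + L * (m + k)) ((1 - X ^ L) ^ k * F) := by
  induction k generalizing m with
  | zero => simp
  | succ k ih =>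
    rw [Function.iterate_succ_apply', fwdDiff, ih, ih, pow_succ', mul_assoc, sub_mul, one_mul,
      map_sub, show m + 1 + k = m + (k + 1) by ring,
      show r + L * (m + (k + 1)) = r + L * (m + k) + L by ring, coeff_X_pow_mul]

lemma isQuasiPolynomial_coeff_of_one_sub_X_pow_pow_mul {L k : ℕ} (hL : 0 < L) {F : ℚ⟦X⟧}
    {W : ℚ[X]} (h : (1 - X ^ L) ^ k * F = (W : ℚ⟦X⟧)) : IsQuasiPolynomial fun n => coeff n F := by
  refine .of_residues hL fun r _ =>
    exists_eventually_eq_eval_of_eventually_fwdDiff_iter_eq_zero (k := k) ?_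
  filter_upwards [eventually_gt_atTop W.natDegree] with m hm
  rw [fwdDiff_iter_coeff_add_mul, h, Polynomial.coeff_coe,
    Polynomial.coeff_eq_zero_of_natDegree_lt]
  calc W.natDegree < m := hm
    _ ≤ L * (m + k) := Nat.le_mul_of_pos_left _ hL |>.trans (Nat.mul_le_mul_left _ le_self_add)
    _ ≤ r + L * (m + k) := le_add_self

noncomputable def qPochhammer (k : ℕ) : ℚ⟦X⟧ := ∏ i ∈ range k, (1 - X ^ (i + 1))

lemma constantCoeff_qPochhammer (k : ℕ) : constantCoeff (qPochhammer k) = 1 := by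
  simp [qPochhammer, map_prod]

lemma exists_one_sub_X_pow_factorial_pow_mul_inv_qPochhammer (k : ℕ) :
    ∃ W : ℚ[X], (1 - X ^ k !) ^ k * (qPochhammer k)⁻¹ = (W : ℚ⟦X⟧) := by
  refine ⟨∏ i ∈ range k, ∑ j ∈ range (k ! / (i + 1)), (Polynomial.X ^ (i + 1)) ^ j, ?_⟩
  have hfactor : ∀ i ∈ range k,
      (1 - X ^ (i + 1)) * ∑ j ∈ range (k ! / (i + 1)), (X ^ (i + 1) : ℚ⟦X⟧) ^ j = 1 - X ^ k ! := by
    intro i hi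
    rw [mul_neg_geom_sum, ← pow_mul,
      Nat.mul_div_cancel' (Nat.dvd_factorial i.succ_pos (mem_range.1 hi))]
  rw [eq_comm, eq_mul_inv_iff_mul_eq (by simp [constantCoeff_qPochhammer]),
    ← Polynomial.coeToPowerSeries.ringHom_apply]
  simp only [map_prod, map_sum, map_pow, Polynomial.coeToPowerSeries.ringHom_apply,
    Polynomial.coe_X]
  rw [mul_comm, qPochhammer, ← prod_mul_distrib, prod_congr rfl hfactor, prod_const, card_range]

lemma isQuasiPolynomial_coeff_X_pow_mul_inv_qPochhammer (k e : ℕ) :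
    IsQuasiPolynomial fun n => coeff n (X ^ e * (qPochhammer k)⁻¹) := by
  obtain ⟨W, hW⟩ := exists_one_sub_X_pow_factorial_pow_mul_inv_qPochhammer k
  refine isQuasiPolynomial_coeff_of_one_sub_X_pow_pow_mul (k := k) k.factorial_pos
    (W := Polynomial.X ^ e * W) ?_
  rw [mul_left_comm, hW, Polynomial.coe_mul, Polynomial.coe_pow, Polynomial.coe_X]

lemma isQuasiPolynomial_coeff_mul_div_two_sub {F : ℚ⟦X⟧}
    (hF : ∀ e, IsQuasiPolynomial fun n => coeff n (X ^ e * F)) {k s t : ℕ} (c : ℕ)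
    (hst : 2 * s < k ∨ 0 < t) :
    IsQuasiPolynomial fun a => coeff (a * k / 2 - c) (X ^ (s * a + t) * F) := by
  by_cases hsk : 2 * s < k
  · refine ((hF (t + c)).comp_mul_div (u := k - 2 * s) (by omega) two_pos).congr ?_
    filter_upwards [eventually_ge_atTop (2 * c)] with a ha
    have hsplit : a * k / 2 = (k - 2 * s) * a / 2 + s * a := by
      rw [show a * k = (k - 2 * s) * a + 2 * (s * a) by zify [hsk.le]; ring,
        Nat.add_mul_div_left _ _ two_pos]
    have hc : c ≤ a * k / 2 := by
      have := Nat.le_mul_of_pos_right a (show 0 < k by omega)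
      omega
    have hcond : s * a + t ≤ a * k / 2 - c ↔ t + c ≤ (k - 2 * s) * a / 2 := by omega
    have hshift : a * k / 2 - c - (s * a + t) = (k - 2 * s) * a / 2 - (t + c) := by omega
    simp only [coeff_X_pow_mul', hcond, hshift]
  · have hzero : ∀ a, a * k / 2 - c < s * a + t := by
      intro a
      have : a * k ≤ 2 * (s * a) := by nlinarith
      omega
    refine IsQuasiPolynomial.zero.congr (Eventually.of_forall fun a => ?_)
    dsimp only
    rw [coeff_X_pow_mul', if_neg (hzero a).not_ge]

lemma coeff_eq_sum_powerset_coeff_inv_qPochhammer {k a : ℕ} {G : ℤ[X]}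
    (hG : G * ∏ i ∈ range k, (1 - Polynomial.X ^ (i + 1)) =
      ∏ i ∈ range k, (1 - Polynomial.X ^ (a + i + 1))) (m : ℕ) :
    (G.coeff m : ℚ) = ∑ t ∈ (range k).powerset,
      (-1) ^ #t * coeff m (X ^ (#t * a + ∑ i ∈ t, (i + 1)) * (qPochhammer k)⁻¹) := by
  let toSeries : ℤ[X] →+* ℚ⟦X⟧ :=
    Polynomial.coeToPowerSeries.ringHom.comp (Polynomial.mapRingHom (Int.castRingHom ℚ))
  have htoSeriesX : toSeries Polynomial.X = X := by simp [toSeries]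
  have hmul : toSeries G * qPochhammer k = ∏ i ∈ range k, (1 - X ^ (a + i + 1)) := by
    simpa [map_prod, htoSeriesX, qPochhammer] using congrArg toSeries hG
  have hexpand : ∏ i ∈ range k, (1 - X ^ (a + i + 1) : ℚ⟦X⟧) = ∑ t ∈ (range k).powerset,
      C ((-1) ^ #t) * X ^ (#t * a + ∑ i ∈ t, (i + 1)) := by
    rw [prod_sub]
    refine sum_congr rfl fun t _ => ?_
    have hexp : ∑ i ∈ t, (a + i + 1) = #t * a + ∑ i ∈ t, (i + 1) := by
      simp only [add_assoc, sum_add_distrib, sum_const, smul_eq_mul]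
    rw [prod_const_one, mul_one, prod_pow_eq_pow_sum, hexp, map_pow, map_neg, map_one]
  have hcoeff : coeff m (toSeries G) = G.coeff m := by simp [toSeries, Polynomial.coeff_coe]
  rw [← hcoeff, (eq_mul_inv_iff_mul_eq (by simp [constantCoeff_qPochhammer])).2 hmul, hexpand,
    sum_mul, map_sum]
  simp only [mul_assoc, coeff_C_mul]

/-- Fix `k ≥ 1` and `c ≥ 0`, and let
`g_{k,c}(a) = [q^{⌊ak/2⌋ - c}] (a+k choose k)_q`, where the Gaussian binomial
coefficient is characterized by `G a · ∏_{i=1}^k (1-q^i) = ∏_{i=1}^k (1-q^{a+i})`.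
Then `a ↦ g_{k,c}(a)` is a quasipolynomial in `a`: there are a period `N ≥ 1` and
polynomials `p_0, …, p_{N-1}` (with rational coefficients) such that
`g_{k,c}(a) = p_{a mod N}(a)` for all sufficiently large `a`. -/
theorem gauss_middle_coeff_quasipolynomial (k : ℕ) (hk : 1 ≤ k) (c : ℕ)
    (G : ℕ → Polynomial ℤ)
    (hG : ∀ a, G a * ∏ i ∈ Finset.range k, (1 - Polynomial.X ^ (i + 1)) =
      ∏ i ∈ Finset.range k, (1 - Polynomial.X ^ (a + i + 1))) :
    ∃ (N : ℕ) (_ : 1 ≤ N) (p : ℕ → Polynomial ℚ) (A : ℕ), ∀ a ≥ A,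
      (zcoeffZ (G a) ((a * k / 2 : ℕ) - (c : ℤ)) : ℚ) = (p (a % N)).eval (a : ℚ) := by
  have hterm : ∀ t ∈ (range k).powerset, IsQuasiPolynomial fun a =>
      (-1) ^ #t * coeff (a * k / 2 - c) (X ^ (#t * a + ∑ i ∈ t, (i + 1)) * (qPochhammer k)⁻¹) := by
    intro t _
    refine (isQuasiPolynomial_coeff_mul_div_two_sub
      (isQuasiPolynomial_coeff_X_pow_mul_inv_qPochhammer k) c ?_).const_mul _
    rcases t.eq_empty_or_nonempty with rfl | ht
    · exact .inl hk
    · exact .inr (sum_pos (fun i _ => i.succ_pos) ht)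
  have hcoeff : (fun a => ∑ t ∈ (range k).powerset, (-1) ^ #t *
      coeff (a * k / 2 - c) (X ^ (#t * a + ∑ i ∈ t, (i + 1)) * (qPochhammer k)⁻¹))
      =ᶠ[atTop] fun a => (zcoeffZ (G a) ((a * k / 2 : ℕ) - (c : ℤ)) : ℚ) := by
    filter_upwards [eventually_ge_atTop (2 * c)] with a ha
    have hc : c ≤ a * k / 2 := by
      have := Nat.le_mul_of_pos_right a hk
      omega
    rw [zcoeffZ, if_pos (by omega), show ((a * k / 2 : ℕ) - (c : ℤ)).toNat = a * k / 2 - c by omega,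
      coeff_eq_sum_powerset_coeff_inv_qPochhammer (hG a)]
  obtain ⟨N, hN, p, hp⟩ := (IsQuasiPolynomial.sum hterm).congr hcoeff
  obtain ⟨A, hA⟩ := eventually_atTop.1 hp
  exact ⟨N, hN, p, A, hA⟩
end

section
/- For positive integers j < k and v \geq 1, v^{k-1} A(k-1, j) = [x^{vj}] (1 + x + \cdots + x^{v-1})^k A_{k-1}(x), where A(k-1,j) is the Eulerian number counting permutations of {1,...,k-1} with j-1 descents and A_{k-1}(x) = \sum_j A(k-1,j) x^j is the Eulerian polynomial. -/
open scoped Classical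

/-- The number of descents of a permutation `w` of `{0, …, d-1}`. -/
noncomputable def descents {d : ℕ} (w : Equiv.Perm (Fin d)) : ℕ :=
  (Finset.univ.filter (fun i : Fin d =>
    ∃ h : (i : ℕ) + 1 < d, w ⟨(i : ℕ) + 1, h⟩ < w i)).card

/-- The Eulerian polynomial `A_d(x) = ∑_{w ∈ S_d} x^{1 + des(w)} = ∑_i A(d,i) x^i`. -/
noncomputable def eulerianPoly (d : ℕ) : Polynomial ℚ :=
  ∑ w : Equiv.Perm (Fin d), Polynomial.X ^ (descents w + 1)

/-- The Eulerian number `A(d,i)`: the number of permutations of a `d`-element set with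
exactly `i-1` descents. -/
noncomputable def eulerianNumber (d i : ℕ) : ℕ :=
  (Finset.univ.filter (fun w : Equiv.Perm (Fin d) => descents w = i - 1)).card

/-!
Sorting a map `f : Fin d → Fin n` with `Tuple.sort` (ties broken by position) yields a
permutation `w`, and the maps sorted by `w` correspond, via `f ↦ f ∘ w`, to the weakly
increasing maps that increase strictly across every descent of `w`. Shifting values up by one
after each of the `d - 1 - des w` remaining steps makes such a map strictly increasing into
`Fin (n + d - 1 - des w)`, so the fibre over `w` has `C(n + d - 1 - des w, d)` elements. This is
Worpitzky's identity `n ^ d = ∑_w C(n + d - 1 - des w, d)`, equivalently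
`A_d(x) / (1 - x)^(d+1) = ∑ n^d x^n`.

With `k = d + 1`, `(1 + x + ⋯ + x^(v-1))^k A_d(x) = (1 - x^v)^k ∑ n^d x^n`, whose coefficient of
`x^(vj)` is `∑_m (-1)^m C(k, m) (v (j - m))^d = v^d [x^j] (1 - x)^k ∑ n^d x^n = v^d A(d, j)`.
-/

open Finset

section Worpitzky

variable {e n : ℕ} {D : Finset (Fin e)} {g : Fin (e + 1) → Fin n}

def DescentCompatible (D : Finset (Fin e)) (g : Fin (e + 1) → Fin n) : Prop :=
  ∀ i : Fin e, (g i.castSucc : ℕ) + (if i ∈ D then 1 else 0) ≤ g i.succ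

theorem DescentCompatible.monotone (hg : DescentCompatible D g) : Monotone g :=
  Fin.monotone_iff_le_succ.2 fun i => Fin.le_def.2 (by have := hg i; omega)

theorem DescentCompatible.one_le_of_lt (hg : DescentCompatible D g) {i : Fin e} (hi : i ∈ D)
    {j : Fin (e + 1)} (hj : (i : ℕ) < j) : 1 ≤ (g j : ℕ) := by
  have hstep := hg i
  have hle : g i.succ ≤ g j := hg.monotone (Fin.castSucc_lt_iff_succ_le.1 (Fin.lt_def.2 hj))
  rw [if_pos hi] at hstep
  rw [Fin.le_def] at hle
  omega

theorem DescentCompatible.add_one_lt_of_le (hg : DescentCompatible D g) {i : Fin e} (hi : i ∈ D)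
    {j : Fin (e + 1)} (hj : (j : ℕ) ≤ i) : (g j : ℕ) + 1 < n := by
  have hstep := hg i
  have hle : g j ≤ g i.castSucc := hg.monotone (Fin.le_def.2 hj)
  rw [if_pos hi] at hstep
  rw [Fin.le_def] at hle
  have := (g i.succ).isLt
  omega

theorem descentCompatible_univ_iff : DescentCompatible univ g ↔ StrictMono g := by
  simp only [DescentCompatible, Fin.strictMono_iff_lt_succ, mem_univ, if_true,
    Nat.add_one_le_iff, Fin.lt_def]

theorem card_descentCompatible_univ :
    Nat.card {g : Fin (e + 1) → Fin n // DescentCompatible univ g} = n.choose (e + 1) := by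
  let toOrderEmb :
      {g : Fin (e + 1) → Fin n // DescentCompatible univ g} ≃ (Fin (e + 1) ↪o Fin n) :=
    { toFun := fun g => OrderEmbedding.ofStrictMono g.1 (descentCompatible_univ_iff.1 g.2)
      invFun := fun f => ⟨f, descentCompatible_univ_iff.2 f.strictMono⟩
      left_inv := fun _ => rfl
      right_inv := fun _ => rfl }
  rw [Nat.card_congr (toOrderEmb.trans Set.powersetCard.ofFinEmbEquiv), Set.powersetCard.card,
    Nat.card_eq_fintype_card, Fintype.card_fin]

/-- Raising by one every value after a weak step `i` makes that step strict. -/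
def descentCompatibleInsertEquiv {i : Fin e} (hi : i ∉ D) :
    {g : Fin (e + 1) → Fin n // DescentCompatible D g} ≃
      {g : Fin (e + 1) → Fin (n + 1) // DescentCompatible (insert i D) g} where
  toFun g := ⟨fun j => ⟨g.1 j + if (i : ℕ) < j then 1 else 0, by split_ifs <;> omega⟩, by
    intro m
    have hm := g.2 m
    rcases eq_or_ne m i with rfl | hmi
    · simp only [hi, mem_insert_self, if_true, if_false, Fin.val_castSucc, Fin.val_succ] at hm ⊢
      split_ifs <;> omega
    · simp only [mem_insert, hmi, false_or, Fin.val_castSucc, Fin.val_succ] at hm ⊢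
      have := Fin.val_ne_of_ne hmi
      split_ifs at hm ⊢ <;> omega⟩
  invFun h := ⟨fun j => ⟨h.1 j - if (i : ℕ) < j then 1 else 0, by
    have := h.2.one_le_of_lt (mem_insert_self i D) (j := j)
    have := h.2.add_one_lt_of_le (mem_insert_self i D) (j := j)
    split_ifs <;> omega⟩, by
    intro m
    have hm := h.2 m
    rcases eq_or_ne m i with rfl | hmi
    · simp only [hi, mem_insert_self, if_true, if_false, Fin.val_castSucc, Fin.val_succ] at hm ⊢
      split_ifs <;> omega
    · simp only [mem_insert, hmi, false_or, Fin.val_castSucc, Fin.val_succ] at hm ⊢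
      have := Fin.val_ne_of_ne hmi
      have := h.2.one_le_of_lt (mem_insert_self i D) (j := m.castSucc)
      rw [Fin.val_castSucc] at this
      split_ifs at hm ⊢ <;> omega⟩
  left_inv g := by
    ext j
    simp
  right_inv h := by
    ext j
    have := h.2.one_le_of_lt (mem_insert_self i D) (j := j)
    simp only
    split_ifs <;> omega

theorem card_descentCompatible (D : Finset (Fin e)) (n : ℕ) :
    Nat.card {g : Fin (e + 1) → Fin n // DescentCompatible D g} =
      (n + (e - #D)).choose (e + 1) := by
  have hD := card_le_univ D
  rw [Fintype.card_fin] at hD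
  induction hweak : e - #D generalizing D n with
  | zero =>
    rw [eq_univ_of_card D (by rw [Fintype.card_fin]; omega), card_descentCompatible_univ,
      add_zero]
  | succ m ih =>
    obtain ⟨i, hi⟩ : ∃ i, i ∉ D := by
      by_contra! h
      rw [eq_univ_of_forall h, card_univ, Fintype.card_fin] at hweak
      omega
    have hcard : #(insert i D) = #D + 1 := card_insert_of_notMem hi
    have hle := card_le_univ (insert i D)
    rw [Fintype.card_fin] at hle
    rw [Nat.card_congr (descentCompatibleInsertEquiv hi), ih _ _ hle (by omega)]
    ring_nf

def descentSet (w : Equiv.Perm (Fin (e + 1))) : Finset (Fin e) :=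
  univ.filter fun i => w i.succ < w i.castSucc

theorem descents_eq_card_descentSet (w : Equiv.Perm (Fin (e + 1))) :
    descents w = #(descentSet w) := by
  rw [descents, ← card_map (s := descentSet w) Fin.castSuccEmb]
  refine congrArg Finset.card (Finset.ext fun j => ?_)
  simp only [descentSet, mem_filter, mem_univ, true_and, mem_map, Fin.castSuccEmb_apply]
  constructor
  · rintro ⟨h, hlt⟩
    exact ⟨⟨j, by omega⟩, hlt, rfl⟩
  · rintro ⟨i, hlt, rfl⟩
    exact ⟨by simp, hlt⟩

theorem descents_le (w : Equiv.Perm (Fin (e + 1))) : descents w ≤ e := by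
  rw [descents_eq_card_descentSet]
  exact (card_le_univ _).trans_eq (Fintype.card_fin e)

/-- `Tuple.sort f` is the permutation `w` for which `i ↦ (f (w i), w i)` increases
lexicographically, and on `Fin` it suffices to check this across each step `i ↦ i + 1`. -/
theorem sort_eq_iff_descentCompatible (f : Fin (e + 1) → Fin n) (w : Equiv.Perm (Fin (e + 1))) :
    Tuple.sort f = w ↔ DescentCompatible (descentSet w) (f ∘ w) := by
  rw [eq_comm, Tuple.eq_sort_iff', Fin.strictMono_iff_lt_succ]
  refine forall_congr' fun i => ?_
  have hne : w i.castSucc ≠ w i.succ := w.injective.ne Fin.castSucc_lt_succ.ne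
  change toLex (f (w i.castSucc), w i.castSucc) < toLex (f (w i.succ), w i.succ) ↔ _
  simp only [Prod.Lex.toLex_lt_toLex, descentSet, mem_filter, mem_univ, true_and,
    Function.comp_apply, Fin.lt_def, Fin.ext_iff]
  have := Fin.val_ne_of_ne hne
  split_ifs <;> omega

theorem card_tuple_sort_eq (w : Equiv.Perm (Fin (e + 1))) (n : ℕ) :
    Nat.card {f : Fin (e + 1) → Fin n // Tuple.sort f = w} =
      (n + (e - descents w)).choose (e + 1) := by
  rw [descents_eq_card_descentSet, ← card_descentCompatible]
  exact Nat.card_congr <| (Equiv.arrowCongr w.symm (Equiv.refl _)).subtypeEquiv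
    fun f => sort_eq_iff_descentCompatible f w

theorem sum_choose_descents_eq_pow (e n : ℕ) :
    ∑ w : Equiv.Perm (Fin (e + 1)), (n + (e - descents w)).choose (e + 1) = n ^ (e + 1) := by
  simp_rw [← card_tuple_sort_eq, ← Nat.card_sigma,
    Nat.card_congr (Equiv.sigmaFiberEquiv Tuple.sort), Nat.card_fun, Nat.card_eq_fintype_card,
    Fintype.card_fin]

end Worpitzky

open PowerSeries

theorem coeff_one_sub_X_pow_pow_mul {R : Type*} [CommRing R] (u k N : ℕ) (F : R⟦X⟧) :
    coeff N ((1 - X ^ u) ^ k * F) = ∑ m ∈ range (k + 1),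
      (-1) ^ m * k.choose m * if u * m ≤ N then coeff (N - u * m) F else 0 := by
  rw [sub_eq_neg_add, add_pow, sum_mul, map_sum]
  refine sum_congr rfl fun m _ => ?_
  have hterm : (-X ^ u : R⟦X⟧) ^ m * 1 ^ (k - m) * (k.choose m : R⟦X⟧) =
      C ((-1 : R) ^ m * k.choose m) * X ^ (u * m) := by
    rw [neg_pow, one_pow, pow_mul, map_mul, map_pow, map_neg, map_one, map_natCast]
    ring
  rw [hterm, mul_assoc, coeff_C_mul, coeff_X_pow_mul']

theorem coeff_one_sub_X_pow_pow_mul_mk_pow {R : Type*} [CommRing R] (u k N d : ℕ) :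
    coeff N ((1 - X ^ u) ^ k * PowerSeries.mk fun n => (n : R) ^ (d + 1)) =
      ∑ m ∈ range (k + 1), (-1) ^ m * k.choose m * ((N - u * m : ℕ) : R) ^ (d + 1) := by
  rw [coeff_one_sub_X_pow_pow_mul]
  refine sum_congr rfl fun m _ => ?_
  split_ifs with h
  · rw [coeff_mk]
  · rw [Nat.sub_eq_zero_of_le (le_of_not_ge h)]
    simp

theorem coe_eulerianPoly_succ_mul_invOneSubPow (e : ℕ) :
    (eulerianPoly (e + 1) : ℚ⟦X⟧) * invOneSubPow ℚ (e + 2) =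
      PowerSeries.mk fun n => (n : ℚ) ^ (e + 1) := by
  ext n
  rw [invOneSubPow_val_succ_eq_mk_add_choose, coeff_mk, ← Nat.cast_pow,
    ← sum_choose_descents_eq_pow e n, eulerianPoly, ← Polynomial.coeToPowerSeries.ringHom_apply,
    map_sum, sum_mul, map_sum, Nat.cast_sum]
  refine sum_congr rfl fun w _ => ?_
  have hw := descents_le w
  rw [map_pow, Polynomial.coeToPowerSeries.ringHom_apply, Polynomial.coe_X, coeff_X_pow_mul']
  split_ifs with h
  · rw [coeff_mk]
    congr 2
    omega
  · rw [Nat.choose_eq_zero_of_lt (by omega), Nat.cast_zero]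

theorem coe_eulerianPoly_succ (e : ℕ) :
    (eulerianPoly (e + 1) : ℚ⟦X⟧) =
      (1 - X) ^ (e + 2) * PowerSeries.mk fun n => (n : ℚ) ^ (e + 1) := by
  rw [← coe_eulerianPoly_succ_mul_invOneSubPow, ← invOneSubPow_inv_eq_one_sub_pow,
    mul_left_comm, (invOneSubPow ℚ (e + 2)).inv_val, mul_one]

theorem coeff_eulerianPoly (d : ℕ) {j : ℕ} (hj : 1 ≤ j) :
    (eulerianPoly d).coeff j = eulerianNumber d j := by
  simp only [eulerianPoly, eulerianNumber, Polynomial.finsetSum_coeff, Polynomial.coeff_X_pow,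
    card_filter, Nat.cast_sum, Nat.cast_ite, Nat.cast_one, Nat.cast_zero]
  refine sum_congr rfl fun w _ => if_congr (by omega) rfl rfl

theorem coe_geomSum_pow_mul_eulerianPoly_succ (v e : ℕ) :
    (((∑ i ∈ range v, Polynomial.X ^ i) ^ (e + 2) * eulerianPoly (e + 1) : Polynomial ℚ) :
      ℚ⟦X⟧) = (1 - X ^ v) ^ (e + 2) * PowerSeries.mk fun n => (n : ℚ) ^ (e + 1) := by
  rw [Polynomial.coe_mul, Polynomial.coe_pow, coe_eulerianPoly_succ, ← mul_assoc, ← mul_pow]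
  congr 2
  simp only [← Polynomial.coe_X, ← Polynomial.coe_one, ← Polynomial.coe_pow,
    ← Polynomial.coe_sub, ← Polynomial.coe_mul, geom_sum_mul_neg]

theorem eulerianNumber_coeff_identity_general (v j k : ℕ) (hj : 1 ≤ j)
    (hjk : j < k) :
    (v : ℚ) ^ (k - 1) * (eulerianNumber (k - 1) j : ℚ) =
      (((∑ i ∈ Finset.range v, Polynomial.X ^ i) ^ k *
        eulerianPoly (k - 1)).coeff (v * j)) := by
  obtain ⟨e, rfl⟩ : ∃ e, k = e + 2 := ⟨k - 2, by omega⟩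
  rw [show e + 2 - 1 = e + 1 by omega, ← coeff_eulerianPoly _ hj, ← Polynomial.coeff_coe,
    coe_eulerianPoly_succ, ← pow_one (X : ℚ⟦X⟧), ← Polynomial.coeff_coe,
    coe_geomSum_pow_mul_eulerianPoly_succ, coeff_one_sub_X_pow_pow_mul_mk_pow,
    coeff_one_sub_X_pow_pow_mul_mk_pow, mul_sum]
  refine sum_congr rfl fun m _ => ?_
  rw [← Nat.mul_sub, one_mul, Nat.cast_mul, mul_pow]
  ring

/-- For positive integers `j < k` and `v ≥ 1`,
`v^{k-1} A(k-1, j) = [x^{vj}] (1 + x + ⋯ + x^{v-1})^k A_{k-1}(x)`. -/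
theorem eulerianNumber_coeff_identity (v j k : ℕ) (hv : 1 ≤ v) (hj : 1 ≤ j)
    (hjk : j < k) :
    (v : ℚ) ^ (k - 1) * (eulerianNumber (k - 1) j : ℚ) =
      (((∑ i ∈ Finset.range v, Polynomial.X ^ i) ^ k *
        eulerianPoly (k - 1)).coeff (v * j)) :=
  eulerianNumber_coeff_identity_general v j k hj hjk
end

section
/- For a \to \infty and every nonnegative integer c, ([q^{2a-c}] - [q^{2a-c-1}])\binom{a+4}{4}_q = (1/24)(2c + 1 + 3\cdot(-1)^c) a + O(1). -/
open Finset PowerSeries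

lemma zcoeffZ_natCast (P : Polynomial ℤ) (n : ℕ) : zcoeffZ P n = P.coeff n := by
  rw [zcoeffZ, if_pos n.cast_nonneg, Int.toNat_natCast]

lemma LinearRecurrence.IsSolution.shift {R : Type*} [CommSemiring R] {E : LinearRecurrence R}
    {u : ℕ → R} (hu : E.IsSolution u) (k : ℕ) : E.IsSolution (fun n ↦ u (n + k)) := by
  intro n
  simpa only [add_right_comm] using hu (n + k)

lemma coeff_succ_mul_one_sub_X {R : Type*} [Ring R] (f : PowerSeries R) (n : ℕ) :
    coeff (n + 1) (f * (1 - X)) = coeff (n + 1) f - coeff n f := by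
  rw [mul_sub, mul_one, map_sub, coeff_succ_mul_X]

lemma exists_prod_one_sub_pow_eq {R : Type*} [CommRing R] (x : R) (a : ℕ) :
    ∃ s : R, ∏ i ∈ range 4, (1 - x ^ (a + i + 1)) =
      1 - ∑ i ∈ range 4, x ^ (a + i + 1) + x ^ (2 * a + 3) * s :=
  ⟨1 + x + 2 * x ^ 2 + x ^ 3 + x ^ 4 - x ^ (a + 3) * (1 + x + x ^ 2 + x ^ 3) + x ^ (2 * a + 7), by
    simp only [prod_range_succ, sum_range_succ, prod_range_zero, sum_range_zero]
    ring⟩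

/-- The number of partitions of `n` into parts `2`, `3` and `4`; the recurrence comes from
`(1 - q^2)(1 - q^3)(1 - q^4) = 1 - q^2 - q^3 - q^4 + q^5 + q^6 + q^7 - q^9`. -/
def partitions234 : ℕ → ℤ
  | 0 => 1 | 1 => 0 | 2 => 1 | 3 => 1 | 4 => 2 | 5 => 1 | 6 => 3 | 7 => 2 | 8 => 4
  | n + 9 => partitions234 (n + 7) + partitions234 (n + 6) + partitions234 (n + 5)
      - partitions234 (n + 4) - partitions234 (n + 3) - partitions234 (n + 2) + partitions234 n

def partitions234Recurrence : LinearRecurrence ℤ := ⟨9, ![1, 0, -1, -1, -1, 1, 1, 1, 0]⟩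

lemma isSolution_partitions234Recurrence_iff (u : ℕ → ℤ) :
    partitions234Recurrence.IsSolution u ↔ ∀ n, u (n + 9) =
      u (n + 7) + u (n + 6) + u (n + 5) - u (n + 4) - u (n + 3) - u (n + 2) + u n := by
  refine forall_congr' fun n ↦ ?_
  change u (n + 9) = ∑ i : Fin 9, ![1, 0, -1, -1, -1, 1, 1, 1, 0] i * u (n + i) ↔ _
  simp only [Fin.sum_univ_succ, Fin.sum_univ_zero, Matrix.cons_val_zero, Matrix.cons_val_succ,
    Fin.val_zero, Fin.val_succ]
  ring_nf

lemma isSolution_partitions234 : partitions234Recurrence.IsSolution partitions234 :=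
  (isSolution_partitions234Recurrence_iff _).2 fun _ ↦ rfl

lemma mk_partitions234_mul :
    PowerSeries.mk partitions234 * ((1 - X ^ 2) * (1 - X ^ 3) * (1 - X ^ 4)) =
      (1 : PowerSeries ℤ) := by
  have hexpand : ((1 - X ^ 2) * (1 - X ^ 3) * (1 - X ^ 4) : PowerSeries ℤ) =
      1 - X ^ 2 - X ^ 3 - X ^ 4 + X ^ 5 + X ^ 6 + X ^ 7 - X ^ 9 := by ring
  ext n
  rw [hexpand]
  simp only [mul_sub, mul_add, mul_one, map_sub, map_add, coeff_mul_X_pow', coeff_one, coeff_mk]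
  rcases lt_or_ge n 9 with hn | hn
  · interval_cases n <;> simp [partitions234]
  · obtain ⟨m, rfl⟩ := Nat.exists_eq_add_of_le' hn
    simp only [partitions234, le_add_iff_nonneg_left, zero_le, ↓reduceIte, Nat.reduceSubDiff,
      add_tsub_cancel_right, Nat.add_eq_zero_iff, OfNat.ofNat_ne_zero, and_false]
    ring

def quasiPoly234 (n : ℕ) : ℤ := n ^ 2 + 9 * n + 3 * (-1) ^ n * n

def partitions234Error (n : ℕ) : ℤ := 48 * partitions234 n - quasiPoly234 n

lemma isSolution_quasiPoly234 : partitions234Recurrence.IsSolution quasiPoly234 := by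
  refine (isSolution_partitions234Recurrence_iff _).2 fun n ↦ ?_
  simp only [quasiPoly234, pow_succ]
  push_cast
  ring

lemma isSolution_partitions234Error : partitions234Recurrence.IsSolution partitions234Error := by
  simp only [LinearRecurrence.is_sol_iff_mem_solSpace]
  exact sub_mem (Submodule.smul_mem _ 48 isSolution_partitions234) isSolution_quasiPoly234

lemma partitions234Error_periodic : Function.Periodic partitions234Error 12 := by
  refine congrFun ((partitions234Recurrence.eq_iff_eqOn_range_order _ _
    (isSolution_partitions234Error.shift 12) isSolution_partitions234Error).2 fun k hk ↦ ?_)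
  simp only [partitions234Recurrence, coe_range, Set.mem_Iio] at hk
  interval_cases k <;> decide

lemma abs_partitions234Error_le (n : ℕ) : |partitions234Error n| ≤ 48 := by
  rw [← partitions234Error_periodic.map_mod_nat]
  have : n % 12 < 12 := Nat.mod_lt _ (by norm_num)
  interval_cases n % 12 <;> decide

lemma mul_one_sub_X_eq_mk_partitions234_mul {g : Polynomial ℤ} {a : ℕ}
    (hg : g * ∏ i ∈ range 4, (1 - Polynomial.X ^ (i + 1)) =
      ∏ i ∈ range 4, (1 - Polynomial.X ^ (a + i + 1))) :
    (g : PowerSeries ℤ) * (1 - X) =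
      PowerSeries.mk partitions234 * ∏ i ∈ range 4, (1 - X ^ (a + i + 1)) := by
  have hg' := congrArg (Polynomial.coeToPowerSeries.ringHom (R := ℤ)) hg
  simp only [map_mul, map_prod, map_sub, map_one, map_pow,
    Polynomial.coeToPowerSeries.ringHom_apply, Polynomial.coe_X] at hg'
  have hfactor : ∏ i ∈ range 4, (1 - X ^ (i + 1) : PowerSeries ℤ) =
      (1 - X) * ((1 - X ^ 2) * (1 - X ^ 3) * (1 - X ^ 4)) := by
    simp only [prod_range_succ, prod_range_zero]
    ring
  rw [hfactor] at hg'
  linear_combination (-((g : PowerSeries ℤ) * (1 - X))) * mk_partitions234_mul +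
    PowerSeries.mk partitions234 * hg'

lemma coeff_sub_coeff_eq_partitions234_sub_sum {g : Polynomial ℤ} {a b : ℕ}
    (hg : g * ∏ i ∈ range 4, (1 - Polynomial.X ^ (i + 1)) =
      ∏ i ∈ range 4, (1 - Polynomial.X ^ (a + i + 1))) (hb : b + 3 ≤ a) :
    g.coeff (a + b + 5) - g.coeff (a + b + 4) =
      partitions234 (a + b + 5) - ∑ i ∈ range 4, partitions234 (b + i + 1) := by
  obtain ⟨s, hs⟩ := exists_prod_one_sub_pow_eq (X : PowerSeries ℤ) a
  have h := congrArg (coeff (a + b + 5)) (mul_one_sub_X_eq_mk_partitions234_mul hg)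
  rw [coeff_succ_mul_one_sub_X, Polynomial.coeff_coe, Polynomial.coeff_coe, hs, mul_add,
    mul_left_comm, map_add, coeff_X_pow_mul', if_neg (by omega), add_zero, mul_sub, mul_one,
    map_sub, coeff_mk, mul_sum, map_sum] at h
  simp only [sum_range_succ, sum_range_zero, coeff_mul_X_pow', coeff_mk] at h ⊢
  rw [if_pos (by omega), if_pos (by omega), if_pos (by omega), if_pos (by omega)] at h
  rw [h, show a + b + 5 - (a + 0 + 1) = b + 4 by omega,
    show a + b + 5 - (a + 1 + 1) = b + 3 by omega, show a + b + 5 - (a + 2 + 1) = b + 2 by omega,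
    show a + b + 5 - (a + 3 + 1) = b + 1 by omega]
  ring

lemma quasiPoly234_sub_sum (c b : ℕ) :
    quasiPoly234 (c + b + 5 + b + 5) - ∑ i ∈ range 4, quasiPoly234 (b + i + 1) =
      2 * (2 * c + 1 + 3 * (-1) ^ c) * (c + b + 5 : ℕ) - 3 * c ^ 2 + 7 * c - 3 * (-1) ^ c * c
        + 60 - 6 * (-1) ^ b := by
  rw [show c + b + 5 + b + 5 = c + 2 * (b + 5) by ring]
  simp only [quasiPoly234, sum_range_succ, sum_range_zero, pow_add, pow_mul, neg_one_sq, one_pow]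
  push_cast
  ring

lemma abs_partitions234_sub_sum_sub_le (c b : ℕ) :
    |48 * (partitions234 (c + b + 5 + b + 5) - ∑ i ∈ range 4, partitions234 (b + i + 1)) -
      2 * (2 * c + 1 + 3 * (-1) ^ c) * (c + b + 5 : ℕ)| ≤ 306 + 3 * c ^ 2 + 10 * c := by
  have hsplit :
      48 * (partitions234 (c + b + 5 + b + 5) - ∑ i ∈ range 4, partitions234 (b + i + 1)) =
        partitions234Error (c + b + 5 + b + 5) - ∑ i ∈ range 4, partitions234Error (b + i + 1) +
          (quasiPoly234 (c + b + 5 + b + 5) - ∑ i ∈ range 4, quasiPoly234 (b + i + 1)) := by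
    simp only [partitions234Error, sum_range_succ, sum_range_zero]
    ring
  rw [hsplit, quasiPoly234_sub_sum]
  simp only [sum_range_succ, sum_range_zero, zero_add]
  have e₀ := abs_partitions234Error_le (c + b + 5 + b + 5)
  have e₁ := abs_partitions234Error_le (b + 0 + 1)
  have e₂ := abs_partitions234Error_le (b + 1 + 1)
  have e₃ := abs_partitions234Error_le (b + 2 + 1)
  have e₄ := abs_partitions234Error_le (b + 3 + 1)
  have hc : (0 : ℤ) ≤ c := c.cast_nonneg
  rw [abs_le] at *
  rcases neg_one_pow_eq_or ℤ c with hc' | hc' <;> rcases neg_one_pow_eq_or ℤ b with hb' | hb' <;>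
    rw [hc', hb'] <;> constructor <;> nlinarith

/-- For every nonnegative integer `c`, as `a → ∞`,
`([q^{2a-c}] - [q^{2a-c-1}]) (a+4 choose 4)_q = (1/24)(2c + 1 + 3·(-1)^c) a + O(1)`,
where the Gaussian binomial coefficient `G a = (a+4 choose 4)_q` is characterized by
`G a · ∏_{i=1}^4 (1-q^i) = ∏_{i=1}^4 (1-q^{a+i})`. -/
theorem gauss_four_coeff_difference_asymptotics (c : ℕ) (G : ℕ → Polynomial ℤ)
    (hG : ∀ a, G a * ∏ i ∈ Finset.range 4, (1 - Polynomial.X ^ (i + 1)) =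
      ∏ i ∈ Finset.range 4, (1 - Polynomial.X ^ (a + i + 1))) :
    ∃ (C : ℝ) (_ : 0 < C) (A : ℕ), ∀ a ≥ A,
      |((zcoeffZ (G a) ((2 * a : ℕ) - (c : ℤ)) -
            zcoeffZ (G a) ((2 * a : ℕ) - (c : ℤ) - 1) : ℤ) : ℝ) -
          (1 / 24) * (2 * c + 1 + 3 * (-1 : ℝ) ^ c) * a| ≤ C := by
  refine ⟨(306 + 3 * c ^ 2 + 10 * c) / 48, by positivity, c + 5, fun a ha ↦ ?_⟩
  obtain ⟨b, rfl⟩ : ∃ b, a = c + b + 5 := ⟨a - c - 5, by omega⟩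
  have hidx : ((2 * (c + b + 5) : ℕ) : ℤ) - c = (c + b + 5 + b + 5 : ℕ) := by push_cast; ring
  have hidx' : ((2 * (c + b + 5) : ℕ) : ℤ) - c - 1 = (c + b + 5 + b + 4 : ℕ) := by
    push_cast; ring
  rw [hidx', hidx, zcoeffZ_natCast, zcoeffZ_natCast,
    coeff_sub_coeff_eq_partitions234_sub_sum (hG _) (by omega)]
  set Δ := partitions234 (c + b + 5 + b + 5) - ∑ i ∈ range 4, partitions234 (b + i + 1)
  have hscale : (Δ : ℝ) - 1 / 24 * (2 * c + 1 + 3 * (-1 : ℝ) ^ c) * (c + b + 5 : ℕ) =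
      ((48 * Δ - 2 * (2 * c + 1 + 3 * (-1) ^ c) * (c + b + 5 : ℕ) : ℤ) : ℝ) / 48 := by
    push_cast
    ring
  rw [hscale, abs_div, abs_of_pos (by norm_num : (0 : ℝ) < 48)]
  gcongr
  exact_mod_cast abs_partitions234_sub_sum_sub_le c b
end
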